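/- Let Z = (Z_1, Z_2) be a standard Gaussian vector in ℝ². For each y ∈ {−1, 1}, the event {sign(Z_1 Z_2) = y} has probability 1/2, and the conditional expectation of Z Zᵀ − I_2 given this event equals (2y/π)·J, where J is the 2×2 matrix with 0 on the diagonal and 1 off-diagonal; that is, E[Z_1 Z_2 | sign(Z_1Z_2) = y] = 2y/π and E[Z_i² | sign(Z_1Z_2) = y] = 1 for i = 1, 2. Consequently, the linear operator on real symmetric 2×2 matrices 𝓕(M) = Σ_{y∈{−1,1}} (1/2)·((2y/π)J) M ((2y/π)J)ᵀ satisfies ‖𝓕(M)‖_F = (4/π²)·‖M‖_F for every symmetric M, so sup{‖𝓕(M)‖_F : ‖M‖_F = 1} = 4/π². -/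

import Mathlib

open MeasureTheory ProbabilityTheory Matrix

/-- The Frobenius norm of a real matrix. -/
noncomputable def frobNorm {p : ℕ} (M : Matrix (Fin p) (Fin p) ℝ) : ℝ :=
  Real.sqrt (∑ i, ∑ j, (M i j) ^ 2)

/-- The 2×2 matrix with 0 on the diagonal and 1 off-diagonal. -/
def Jmat : Matrix (Fin 2) (Fin 2) ℝ := !![0, 1; 1, 0]

/-- The linearized operator for the 2-sparse parity:
`𝓕(M) = ∑_{y ∈ {−1,1}} (1/2)·((2y/π)J) M ((2y/π)J)ᵀ`. -/
noncomputable def parity2Op (M : Matrix (Fin 2) (Fin 2) ℝ) :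
    Matrix (Fin 2) (Fin 2) ℝ :=
  ∑ y ∈ ({-1, 1} : Finset ℝ),
    (1 / 2 : ℝ) • (((2 * y / Real.pi) • Jmat) * M * ((2 * y / Real.pi) • Jmat)ᵀ)

/-! `J M J` only permutes the entries of `M`, and `(2y/π)² = 4/π²` for `y = ±1`, so `𝓕` is `4/π²`
times a Frobenius isometry.

For the moments, `{sign(z₁z₂) = ±1}` is a union of two products of half-lines, so the integral
of `f(z₁) g(z₂)` over it factors into half-line integrals. The reflection `x ↦ -x` preserves the
Gaussian, so a half-line integral is `∫ f / 2` for even `f` and `±∫_{x>0} f` for odd `f`. This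
gives probability `1/2` and `E[Z_i² ; ·] = 1/2`, while `E[Z₁Z₂ ; ·] = ±2 (∫_{x>0} x dγ)² = ±1/π`. -/

open Real Set
open scoped NNReal

theorem frobNorm_smul {p : ℕ} (c : ℝ) (M : Matrix (Fin p) (Fin p) ℝ) :
    frobNorm (c • M) = |c| * frobNorm M := by
  simp only [frobNorm, Matrix.smul_apply, smul_eq_mul, mul_pow, ← Finset.mul_sum]
  rw [sqrt_mul (sq_nonneg c), sqrt_sq_eq_abs]

theorem frobNorm_submatrix {p : ℕ} (M : Matrix (Fin p) (Fin p) ℝ) (e f : Equiv.Perm (Fin p)) :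
    frobNorm (M.submatrix e f) = frobNorm M := by
  unfold frobNorm
  congr 1
  exact Fintype.sum_equiv e _ _ fun i => Fintype.sum_equiv f _ _ fun j => rfl

theorem Jmat_mul_mul_Jmat (M : Matrix (Fin 2) (Fin 2) ℝ) :
    Jmat * M * Jmat = M.submatrix (Equiv.swap 0 1) (Equiv.swap 0 1) := by
  ext i j
  fin_cases i <;> fin_cases j <;> simp [Jmat, mul_apply, vecMul, dotProduct, Fin.sum_univ_two]

theorem parity2Op_eq_smul (M : Matrix (Fin 2) (Fin 2) ℝ) :
    parity2Op M = (4 / π ^ 2) • (Jmat * M * Jmat) := by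
  have hJ : Jmatᵀ = Jmat := by
    ext i j
    fin_cases i <;> fin_cases j <;> rfl
  rw [parity2Op, Finset.sum_pair (by norm_num)]
  simp only [transpose_smul, hJ, smul_mul_assoc, mul_smul_comm, smul_smul, ← add_smul]
  congr 1
  ring

theorem frobNorm_parity2Op (M : Matrix (Fin 2) (Fin 2) ℝ) :
    frobNorm (parity2Op M) = 4 / π ^ 2 * frobNorm M := by
  rw [parity2Op_eq_smul, frobNorm_smul, Jmat_mul_mul_Jmat, frobNorm_submatrix,
    abs_of_pos (by positivity)]

theorem sSup_frobNorm_parity2Op :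
    sSup {x : ℝ | ∃ M : Matrix (Fin 2) (Fin 2) ℝ,
        M.IsSymm ∧ frobNorm M = 1 ∧ x = frobNorm (parity2Op M)} = 4 / π ^ 2 := by
  have hunit : frobNorm (diagonal (Pi.single 0 1) : Matrix (Fin 2) (Fin 2) ℝ) = 1 := by
    simp [frobNorm, Fin.sum_univ_two]
  suffices h : {x : ℝ | ∃ M : Matrix (Fin 2) (Fin 2) ℝ,
      M.IsSymm ∧ frobNorm M = 1 ∧ x = frobNorm (parity2Op M)} = {4 / π ^ 2} by
    rw [h, csSup_singleton]
  ext x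
  simp only [mem_ofPred_eq, mem_singleton_iff, frobNorm_parity2Op]
  constructor
  · rintro ⟨M, -, hM, rfl⟩
    rw [hM, mul_one]
  · rintro rfl
    exact ⟨_, isSymm_diagonal _, hunit, by rw [hunit, mul_one]⟩

theorem Real.sign_eq_one_iff {r : ℝ} : Real.sign r = 1 ↔ 0 < r := by
  refine ⟨fun h => ?_, Real.sign_of_pos⟩
  rcases lt_trichotomy r 0 with hr | rfl | hr
  · norm_num [Real.sign_of_neg hr] at h
  · norm_num [Real.sign_zero] at h
  · exact hr

theorem Real.sign_eq_neg_one_iff {r : ℝ} : Real.sign r = -1 ↔ r < 0 := by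
  refine ⟨fun h => ?_, Real.sign_of_neg⟩
  rcases lt_trichotomy r 0 with hr | rfl | hr
  · exact hr
  · norm_num [Real.sign_zero] at h
  · norm_num [Real.sign_of_pos hr] at h

theorem Real.measurable_sign : Measurable Real.sign :=
  Measurable.ite measurableSet_Iio measurable_const
    (Measurable.ite measurableSet_Ioi measurable_const measurable_const)

theorem setOf_sign_mul_eq_one :
    {p : ℝ × ℝ | Real.sign (p.1 * p.2) = 1} = Ioi 0 ×ˢ Ioi 0 ∪ Iio 0 ×ˢ Iio 0 := by
  ext p
  simp [Real.sign_eq_one_iff, mul_pos_iff]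

theorem setOf_sign_mul_eq_neg_one :
    {p : ℝ × ℝ | Real.sign (p.1 * p.2) = -1} = Ioi 0 ×ˢ Iio 0 ∪ Iio 0 ×ˢ Ioi 0 := by
  ext p
  simp [Real.sign_eq_neg_one_iff, mul_neg_iff]

section Product

variable {α β : Type*} [MeasurableSpace α] [MeasurableSpace β] {μ : Measure α} {ν : Measure β}
  [SFinite μ] [SFinite ν]

theorem setIntegral_union_prod_mul {s s' : Set α} {t t' : Set β} (hs : Disjoint s s')
    (hs' : MeasurableSet s') (ht' : MeasurableSet t') {f : α → ℝ} {g : β → ℝ}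
    (hf : Integrable f μ) (hg : Integrable g ν) :
    ∫ p in s ×ˢ t ∪ s' ×ˢ t', f p.1 * g p.2 ∂μ.prod ν =
      (∫ x in s, f x ∂μ) * (∫ y in t, g y ∂ν) + (∫ x in s', f x ∂μ) * ∫ y in t', g y ∂ν := by
  have hint : ∀ u v, IntegrableOn (fun p : α × β => f p.1 * g p.2) (u ×ˢ v) (μ.prod ν) :=
    fun u v => by
      rw [IntegrableOn, ← Measure.prod_restrict]
      exact hf.restrict.mul_prod hg.restrict
  rw [setIntegral_union (Set.disjoint_prod.2 (Or.inl hs)) (hs'.prod ht') (hint _ _) (hint _ _),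
    setIntegral_prod_mul, setIntegral_prod_mul]

end Product

section Symmetric

variable {μ : Measure ℝ} [μ.IsNegInvariant]

theorem setIntegral_Iio_eq_setIntegral_Ioi_comp_neg (f : ℝ → ℝ) :
    ∫ x in Iio 0, f x ∂μ = ∫ x in Ioi 0, f (-x) ∂μ := by
  have h := (Measure.measurePreserving_neg μ).setIntegral_preimage_emb
    (MeasurableEquiv.neg ℝ).measurableEmbedding f (Iio 0)
  simpa using h.symm

theorem setIntegral_Iio_of_odd {f : ℝ → ℝ} (hf : ∀ x, f (-x) = -f x) :
    ∫ x in Iio 0, f x ∂μ = -∫ x in Ioi 0, f x ∂μ := by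
  simp only [setIntegral_Iio_eq_setIntegral_Ioi_comp_neg, hf, integral_neg]

theorem setIntegral_Iio_of_even {f : ℝ → ℝ} (hf : ∀ x, f (-x) = f x) :
    ∫ x in Iio 0, f x ∂μ = ∫ x in Ioi 0, f x ∂μ := by
  simp only [setIntegral_Iio_eq_setIntegral_Ioi_comp_neg, hf]

theorem setIntegral_Ioi_of_even (hμ : μ {0} = 0) {f : ℝ → ℝ} (hf : ∀ x, f (-x) = f x)
    (hfi : Integrable f μ) : ∫ x in Ioi 0, f x ∂μ = (∫ x, f x ∂μ) / 2 := by
  have h := intervalIntegral.integral_Iic_add_Ioi (b := 0) hfi.integrableOn hfi.integrableOn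
  rw [setIntegral_congr_set (Iio_ae_eq_Iic' hμ).symm, setIntegral_Iio_of_even hf] at h
  linarith

end Symmetric

section SignOfProduct

variable {μ ν : Measure ℝ} [SFinite μ] [SFinite ν] [μ.IsNegInvariant] [ν.IsNegInvariant]
  {f g : ℝ → ℝ} {y : ℝ}

theorem setIntegral_sign_mul_eq_of_odd (hf : Integrable f μ) (hg : Integrable g ν)
    (hf_odd : ∀ x, f (-x) = -f x) (hg_odd : ∀ x, g (-x) = -g x) (hy : y = -1 ∨ y = 1) :
    ∫ p in {p : ℝ × ℝ | Real.sign (p.1 * p.2) = y}, f p.1 * g p.2 ∂μ.prod ν =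
      2 * y * (∫ x in Ioi 0, f x ∂μ) * ∫ x in Ioi 0, g x ∂ν := by
  rcases hy with rfl | rfl
  · rw [setOf_sign_mul_eq_neg_one, setIntegral_union_prod_mul
      (Ioi_disjoint_Iio_same) measurableSet_Iio measurableSet_Ioi hf hg,
      setIntegral_Iio_of_odd hf_odd, setIntegral_Iio_of_odd hg_odd]
    ring
  · rw [setOf_sign_mul_eq_one, setIntegral_union_prod_mul
      (Ioi_disjoint_Iio_same) measurableSet_Iio measurableSet_Iio hf hg,
      setIntegral_Iio_of_odd hf_odd, setIntegral_Iio_of_odd hg_odd]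
    ring

theorem setIntegral_sign_mul_eq_of_even (hμ : μ {0} = 0) (hν : ν {0} = 0)
    (hf : Integrable f μ) (hg : Integrable g ν)
    (hf_even : ∀ x, f (-x) = f x) (hg_even : ∀ x, g (-x) = g x) (hy : y = -1 ∨ y = 1) :
    ∫ p in {p : ℝ × ℝ | Real.sign (p.1 * p.2) = y}, f p.1 * g p.2 ∂μ.prod ν =
      (∫ x, f x ∂μ) * (∫ x, g x ∂ν) / 2 := by
  have hf_Ioi := setIntegral_Ioi_of_even hμ hf_even hf
  have hg_Ioi := setIntegral_Ioi_of_even hν hg_even hg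
  have hf_Iio := (setIntegral_Iio_of_even (μ := μ) hf_even).trans hf_Ioi
  have hg_Iio := (setIntegral_Iio_of_even (μ := ν) hg_even).trans hg_Ioi
  rcases hy with rfl | rfl
  · rw [setOf_sign_mul_eq_neg_one, setIntegral_union_prod_mul
      (Ioi_disjoint_Iio_same) measurableSet_Iio measurableSet_Ioi hf hg,
      hf_Ioi, hf_Iio, hg_Ioi, hg_Iio]
    ring
  · rw [setOf_sign_mul_eq_one, setIntegral_union_prod_mul
      (Ioi_disjoint_Iio_same) measurableSet_Iio measurableSet_Iio hf hg,
      hf_Ioi, hf_Iio, hg_Ioi, hg_Iio]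
    ring

end SignOfProduct

section Gaussian

variable {v : ℝ≥0}

instance isNegInvariant_gaussianReal : (gaussianReal 0 v).IsNegInvariant :=
  ⟨by
    have h := gaussianReal_map_neg (μ := 0) (v := v)
    rwa [neg_zero] at h⟩

theorem gaussianReal_singleton (μ : ℝ) (hv : v ≠ 0) (x : ℝ) : gaussianReal μ v {x} = 0 :=
  gaussianReal_absolutelyContinuous μ hv (Real.volume_singleton)

theorem integrable_id_gaussianReal (μ : ℝ) : Integrable (fun x => x) (gaussianReal μ v) :=
  (memLp_id_gaussianReal 1).integrable le_rfl

theorem integrable_sq_gaussianReal (μ : ℝ) : Integrable (fun x => x ^ 2) (gaussianReal μ v) :=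
  (memLp_id_gaussianReal 2).integrable_sq

theorem integral_sq_gaussianReal : ∫ x, x ^ 2 ∂gaussianReal 0 v = v := by
  have h := variance_eq_integral (μ := gaussianReal 0 v) measurable_id'.aemeasurable
  simp only [variance_fun_id_gaussianReal, integral_id_gaussianReal, sub_zero] at h
  exact h.symm

theorem integral_Ioi_mul_exp_neg_mul_sq {b : ℝ} (hb : 0 < b) :
    ∫ x in Ioi 0, x * exp (-b * x ^ 2) = (2 * b)⁻¹ := by
  have h := integral_mul_cexp_neg_mul_sq (b := (b : ℂ)) (by simpa using hb)
  have hc : ((∫ x in Ioi 0, x * exp (-b * x ^ 2) : ℝ) : ℂ) = ((2 * b)⁻¹ : ℝ) := by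
    rw [← integral_complex_ofReal]
    push_cast
    exact h
  exact_mod_cast hc

theorem setIntegral_gaussianReal_eq_setIntegral_smul {E : Type*} [NormedAddCommGroup E]
    [NormedSpace ℝ E] (μ : ℝ) (hv : v ≠ 0) (s : Set ℝ) (f : ℝ → E) :
    ∫ x in s, f x ∂gaussianReal μ v = ∫ x in s, gaussianPDFReal μ v x • f x := by
  rw [gaussianReal_of_var_ne_zero _ hv, setIntegral_withDensity_eq_setIntegral_toReal_smul₀' s
    (measurable_gaussianPDF μ v).aemeasurable (ae_of_all _ fun _ => gaussianPDF_lt_top)]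
  simp only [toReal_gaussianPDF]

theorem setIntegral_Ioi_id_gaussianReal (hv : v ≠ 0) :
    ∫ x in Ioi 0, x ∂gaussianReal 0 v = √(v / (2 * π)) := by
  have h := integral_Ioi_mul_exp_neg_mul_sq (b := (2 * (v : ℝ))⁻¹) (by positivity)
  rw [setIntegral_gaussianReal_eq_setIntegral_smul _ hv]
  simp only [gaussianPDFReal, sub_zero, smul_eq_mul]
  calc ∫ x in Ioi 0, (√(2 * π * v))⁻¹ * rexp (-x ^ 2 / (2 * v)) * x
      = (√(2 * π * v))⁻¹ * ∫ x in Ioi 0, x * rexp (-(2 * (v : ℝ))⁻¹ * x ^ 2) := by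
        rw [← integral_const_mul]
        congr 1 with x
        rw [neg_div, div_eq_inv_mul, neg_mul]
        ring
    _ = √(v / (2 * π)) := by
        have hpos : 0 < 2 * π * v := by positivity
        rw [h, show (2 * (2 * (v : ℝ))⁻¹)⁻¹ = v by field_simp, eq_comm,
          sqrt_eq_iff_mul_self_eq_of_pos (by positivity)]
        field_simp
        rw [sq_sqrt hpos.le]

end Gaussian

section GaussianPair

variable {v w : ℝ≥0} {y : ℝ}

theorem measureReal_sign_mul_gaussianReal_prod (hv : v ≠ 0) (hw : w ≠ 0) (hy : y = -1 ∨ y = 1) :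
    ((gaussianReal 0 v).prod (gaussianReal 0 w)).real {p : ℝ × ℝ | Real.sign (p.1 * p.2) = y} =
      1 / 2 := by
  have h := setIntegral_sign_mul_eq_of_even (gaussianReal_singleton 0 hv 0)
    (gaussianReal_singleton 0 hw 0) (integrable_const (1 : ℝ)) (integrable_const (1 : ℝ))
    (fun _ => rfl) (fun _ => rfl) hy
  simpa using h

theorem setIntegral_sign_mul_fst_sq_gaussianReal_prod (hv : v ≠ 0) (hw : w ≠ 0)
    (hy : y = -1 ∨ y = 1) :
    ∫ p in {p : ℝ × ℝ | Real.sign (p.1 * p.2) = y}, p.1 ^ 2 ∂(gaussianReal 0 v).prod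
      (gaussianReal 0 w) = v / 2 := by
  have h := setIntegral_sign_mul_eq_of_even (gaussianReal_singleton 0 hv 0)
    (gaussianReal_singleton 0 hw 0) (integrable_sq_gaussianReal 0) (integrable_const (1 : ℝ))
    (fun x => neg_sq x) (fun _ => rfl) hy
  simpa [integral_sq_gaussianReal] using h

theorem setIntegral_sign_mul_snd_sq_gaussianReal_prod (hv : v ≠ 0) (hw : w ≠ 0)
    (hy : y = -1 ∨ y = 1) :
    ∫ p in {p : ℝ × ℝ | Real.sign (p.1 * p.2) = y}, p.2 ^ 2 ∂(gaussianReal 0 v).prod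
      (gaussianReal 0 w) = w / 2 := by
  have h := setIntegral_sign_mul_eq_of_even (gaussianReal_singleton 0 hv 0)
    (gaussianReal_singleton 0 hw 0) (integrable_const (1 : ℝ)) (integrable_sq_gaussianReal 0)
    (fun _ => rfl) (fun x => neg_sq x) hy
  simpa [integral_sq_gaussianReal] using h

theorem setIntegral_sign_mul_mul_gaussianReal_prod (hv : v ≠ 0) (hw : w ≠ 0)
    (hy : y = -1 ∨ y = 1) :
    ∫ p in {p : ℝ × ℝ | Real.sign (p.1 * p.2) = y}, p.1 * p.2 ∂(gaussianReal 0 v).prod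
      (gaussianReal 0 w) = y * √(v * w) / π := by
  rw [setIntegral_sign_mul_eq_of_odd (integrable_id_gaussianReal 0) (integrable_id_gaussianReal 0)
    (fun _ => rfl) (fun _ => rfl) hy, setIntegral_Ioi_id_gaussianReal hv,
    setIntegral_Ioi_id_gaussianReal hw, mul_assoc, ← sqrt_mul (by positivity),
    show v / (2 * π) * (w / (2 * π)) = v * w / (2 * π) ^ 2 by ring,
    sqrt_div' _ (sq_nonneg _), sqrt_sq (by positivity)]
  field_simp

end GaussianPair

theorem integral_cond_preimage {Ω α : Type*} [MeasurableSpace Ω] [MeasurableSpace α]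
    {P : Measure Ω} {T : Ω → α} (hT : Measurable T) {s : Set α} (hs : MeasurableSet s)
    {f : α → ℝ} (hf : AEStronglyMeasurable f (P.map T)) :
    ∫ ω, f (T ω) ∂P[|T ⁻¹' s] = ((P.map T).real s)⁻¹ * ∫ x in s, f x ∂P.map T := by
  rw [ProbabilityTheory.cond, integral_smul_measure, setIntegral_map hs hf hT.aemeasurable,
    measureReal_def, Measure.map_apply hT hs, ENNReal.toReal_inv, smul_eq_mul]

theorem map_fin_two_eq_prod {Ω : Type*} [MeasurableSpace Ω] {P : Measure Ω}
    {Z : Ω → Fin 2 → ℝ} (hZ : Measurable Z) {μ : Fin 2 → Measure ℝ} [∀ i, SigmaFinite (μ i)]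
    (hmap : P.map Z = Measure.pi μ) :
    P.map (fun ω => (Z ω 0, Z ω 1)) = (μ 0).prod (μ 1) := by
  rw [show (fun ω => (Z ω 0, Z ω 1)) = MeasurableEquiv.piFinTwo (fun _ => ℝ) ∘ Z from rfl,
    ← Measure.map_map (MeasurableEquiv.measurable _) hZ, hmap,
    (measurePreserving_piFinTwo μ).map_eq]

/-- 2-sparse parity `g(z₁,z₂) = sign(z₁z₂)`: each label value has probability
`1/2`, the conditional second moments are
`E[Z₁Z₂ | sign(Z₁Z₂) = y] = 2y/π` and `E[Z_i² | sign(Z₁Z₂) = y] = 1`, and the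
resulting linearized operator satisfies `‖𝓕(M)‖_F = (4/π²)‖M‖_F` on symmetric
matrices, so its operator norm is `4/π²`. -/
theorem two_sparse_parity_computation {Ω : Type*} [MeasurableSpace Ω]
    (P : Measure Ω) [IsProbabilityMeasure P]
    (Z : Ω → Fin 2 → ℝ) (hZmeas : Measurable Z)
    (hZ : Measure.map Z P = Measure.pi fun _ : Fin 2 => gaussianReal 0 1) :
    (∀ y : ℝ, (y = -1 ∨ y = 1) →
      P {ω | Real.sign (Z ω 0 * Z ω 1) = y} = 1 / 2 ∧
      (∫ ω, Z ω 0 * Z ω 1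
          ∂(ProbabilityTheory.cond P {ω | Real.sign (Z ω 0 * Z ω 1) = y})) =
        2 * y / Real.pi ∧
      (∀ i : Fin 2,
        (∫ ω, (Z ω i) ^ 2
            ∂(ProbabilityTheory.cond P {ω | Real.sign (Z ω 0 * Z ω 1) = y})) = 1)) ∧
    (∀ M : Matrix (Fin 2) (Fin 2) ℝ, M.IsSymm →
      frobNorm (parity2Op M) = (4 / Real.pi ^ 2) * frobNorm M) ∧
    sSup {x : ℝ | ∃ M : Matrix (Fin 2) (Fin 2) ℝ,
        M.IsSymm ∧ frobNorm M = 1 ∧ x = frobNorm (parity2Op M)} =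
      4 / Real.pi ^ 2 := by
  refine ⟨fun y hy => ?_, fun M _ => frobNorm_parity2Op M, sSup_frobNorm_parity2Op⟩
  set T : Ω → ℝ × ℝ := fun ω => (Z ω 0, Z ω 1)
  have hT : Measurable T := by fun_prop
  have hmap : P.map T = (gaussianReal 0 1).prod (gaussianReal 0 1) :=
    map_fin_two_eq_prod hZmeas hZ
  set S := {p : ℝ × ℝ | Real.sign (p.1 * p.2) = y}
  have hS : MeasurableSet S :=
    measurableSet_eq_fun (Real.measurable_sign.comp (by fun_prop)) measurable_const
  have hS_half := measureReal_sign_mul_gaussianReal_prod one_ne_zero one_ne_zero hy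
  have hcond (f : ℝ × ℝ → ℝ) (hf : Measurable f) :
      ∫ ω, f (T ω) ∂P[|T ⁻¹' S] =
        2 * ∫ p in S, f p ∂(gaussianReal 0 1).prod (gaussianReal 0 1) := by
    rw [integral_cond_preimage hT hS hf.aestronglyMeasurable, hmap, hS_half]
    norm_num
  refine ⟨?_, ?_, Fin.forall_fin_two.2 ⟨?_, ?_⟩⟩
  · rw [show {ω | Real.sign (Z ω 0 * Z ω 1) = y} = T ⁻¹' S from rfl, ← Measure.map_apply hT hS,
      hmap, ← ofReal_measureReal, hS_half, ENNReal.ofReal_div_of_pos two_pos]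
    simp
  · refine (hcond (fun p => p.1 * p.2) (by fun_prop)).trans ?_
    rw [setIntegral_sign_mul_mul_gaussianReal_prod one_ne_zero one_ne_zero hy]
    norm_num
    ring
  · refine (hcond (fun p => p.1 ^ 2) (by fun_prop)).trans ?_
    rw [setIntegral_sign_mul_fst_sq_gaussianReal_prod one_ne_zero one_ne_zero hy]
    norm_num
  · refine (hcond (fun p => p.2 ^ 2) (by fun_prop)).trans ?_
    rw [setIntegral_sign_mul_snd_sq_gaussianReal_prod one_ne_zero one_ne_zero hy]
    norm_num
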